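/- If a sequence (L_n) of nonnegative integers satisfies n 2^{−L_n} → ∞ and N_{L_n} ~ n 2^{−L_n}, then the average scale η_n := (Σ_{j=L_n}^{j₁} j N_j)/(Σ_{j=L_n}^{j₁} N_j), with N_j ≤ n 2^{−j}, satisfies L_n ≤ η_n < L_n + 1 for all sufficiently large n, uniformly over j₁ ∈ [L_n, J_n] where 2^{J_n} ≍ n. -/
import Mathlib

open Finset Filter

noncomputable def Nj (n T : ℕ) (j : ℕ) : ℤ :=
  max (⌊(2 : ℝ) ^ (-(j : ℝ)) * ((n : ℝ) - (T : ℝ) + 1)⌋ - (T : ℤ) + 1) 0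

lemma Nj_cast (n T j : ℕ) :
    ((Nj n T j : ℤ) : ℝ) =
      max ((⌊(2:ℝ)^(-(j:ℝ)) * ((n:ℝ) - T + 1)⌋ : ℝ) - T + 1) 0 := by
  unfold Nj; push_cast; ring_nf

lemma Nj_nonneg_real (n T j : ℕ) : (0:ℝ) ≤ ((Nj n T j : ℤ) : ℝ) := by
  rw [Nj_cast]; exact le_max_right _ _

lemma Nj_le_real (n T j : ℕ) (hT : 1 ≤ T) (hM : 0 ≤ (n:ℝ) - T + 1) :
    ((Nj n T j : ℤ) : ℝ) ≤ (2:ℝ)^(-(j:ℝ)) * ((n:ℝ) - T + 1) := by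
  rw [Nj_cast]
  have hx : (0:ℝ) ≤ (2:ℝ)^(-(j:ℝ)) * ((n:ℝ) - T + 1) := by positivity
  have hfl := Int.floor_le ((2:ℝ)^(-(j:ℝ)) * ((n:ℝ) - T + 1))
  have hT1 : (1:ℝ) ≤ T := by exact_mod_cast hT
  exact max_le (by linarith) hx

lemma Nj_ge_real (n T j : ℕ) :
    (2:ℝ)^(-(j:ℝ)) * ((n:ℝ) - T + 1) - T ≤ ((Nj n T j : ℤ) : ℝ) := by
  rw [Nj_cast]
  have := Int.sub_one_lt_floor ((2:ℝ)^(-(j:ℝ)) * ((n:ℝ) - T + 1))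
  refine le_trans ?_ (le_max_left _ _)
  linarith

lemma Nj_ne_zero (n T j : ℕ) (h : Nj n T j ≠ 0) :
    (T:ℝ) ≤ (2:ℝ)^(-(j:ℝ)) * ((n:ℝ) - T + 1) := by
  have h0 : (0:ℤ) ≤ Nj n T j := le_max_right _ _
  have h1 : (1:ℤ) ≤ Nj n T j := lt_of_le_of_ne h0 (Ne.symm h)
  have h2 : (T:ℤ) ≤ ⌊(2:ℝ)^(-(j:ℝ)) * ((n:ℝ) - T + 1)⌋ := by
    unfold Nj at h1
    rcases (max_cases (⌊(2:ℝ)^(-(j:ℝ)) * ((n:ℝ) - T + 1)⌋ - (T:ℤ) + 1) 0) with ⟨he, _⟩ | ⟨he, _⟩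
    · rw [he] at h1; omega
    · rw [he] at h1; omega
  have := Int.le_floor.mp h2
  simpa using this

lemma geom_aux : ∀ m : ℕ, ∑ k ∈ Icc 2 m, ((k:ℝ)-1) * (2:ℝ)^(-(k:ℝ))
    = 1 - ((m:ℝ)+1) * (2:ℝ)^(-(m:ℝ)) := by
  intro m
  induction m with
  | zero => simp
  | succ m ih =>
    rcases Nat.eq_zero_or_pos m with h|h
    · subst h
      rw [show Icc 2 1 = (∅ : Finset ℕ) by rfl]
      norm_num
    · rw [Finset.sum_Icc_succ_top (by omega : 2 ≤ m+1), ih]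
      have h2 : (2:ℝ)^(-((m:ℝ)+1)) = (2:ℝ)^(-(m:ℝ)) * (2:ℝ)⁻¹ := by
        rw [show -((m:ℝ)+1) = -(m:ℝ) + (-1) by ring, Real.rpow_add (by norm_num)]
        norm_num [Real.rpow_neg_one]
      push_cast
      rw [h2]
      ring

/-- Eq. (41): for large `n`, uniformly over `j₁ ∈ [L_n, J_n]`, the average scale
`η_n = (Σ_{j=L_n}^{j₁} j N_j)/(Σ_{j=L_n}^{j₁} N_j)` satisfies `L_n ≤ η_n < L_n + 1`. -/
theorem average_scale_within_one_of_min_scale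
    (T : ℕ) (hT : 1 ≤ T)
    (L J : ℕ → ℕ)
    (hL : Tendsto (fun n : ℕ => (n : ℝ) * (2 : ℝ) ^ (-(L n : ℝ))) atTop atTop)
    (c₁ c₂ : ℝ) (hc₁ : 0 < c₁)
    (hJ : ∀ n : ℕ, 1 ≤ n → c₁ * (n : ℝ) ≤ (2 : ℝ) ^ ((J n : ℕ) : ℝ) ∧
      (2 : ℝ) ^ ((J n : ℕ) : ℝ) ≤ c₂ * (n : ℝ))
    (hNequiv : Tendsto
      (fun n : ℕ => ((Nj n T (L n) : ℤ) : ℝ) / ((n : ℝ) * (2 : ℝ) ^ (-(L n : ℝ))))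
      atTop (nhds 1)) :
    ∀ᶠ n : ℕ in atTop, ∀ j₁ : ℕ, L n ≤ j₁ → j₁ ≤ J n →
      (L n : ℝ) ≤
          (∑ j ∈ Finset.Icc (L n) j₁, (j : ℝ) * ((Nj n T j : ℤ) : ℝ)) /
            (∑ j ∈ Finset.Icc (L n) j₁, ((Nj n T j : ℤ) : ℝ)) ∧
        (∑ j ∈ Finset.Icc (L n) j₁, (j : ℝ) * ((Nj n T j : ℤ) : ℝ)) /
            (∑ j ∈ Finset.Icc (L n) j₁, ((Nj n T j : ℤ) : ℝ)) < (L n : ℝ) + 1 := by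
  filter_upwards [hL.eventually_ge_atTop ((2*(T:ℝ)) + 2), eventually_ge_atTop T]
    with n hn hnT
  intro j₁ hj₁L hj₁J
  set Ln := L n with hLn
  set M : ℝ := (n:ℝ) - T + 1 with hMdef
  have hTn : (T:ℝ) ≤ (n:ℝ) := by exact_mod_cast hnT
  have hT1 : (1:ℝ) ≤ (T:ℝ) := by exact_mod_cast hT
  have hM1 : 1 ≤ M := by rw [hMdef]; linarith
  have hM0 : 0 ≤ M := by linarith
  have hpow_pos : (0:ℝ) < (2:ℝ)^(-(Ln:ℝ)) := Real.rpow_pos_of_pos two_pos _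
  have hpow_le_one : (2:ℝ)^(-(Ln:ℝ)) ≤ 1 :=
    Real.rpow_le_one_of_one_le_of_nonpos one_le_two (neg_nonpos.mpr (Nat.cast_nonneg _))
  have hML : (T:ℝ) + 3 ≤ (2:ℝ)^(-(Ln:ℝ)) * M := by
    have he : (2:ℝ)^(-(Ln:ℝ)) * M
        = (n:ℝ)*(2:ℝ)^(-(Ln:ℝ)) - ((T:ℝ)-1)*(2:ℝ)^(-(Ln:ℝ)) := by rw [hMdef]; ring
    nlinarith
  have hNL : (2:ℝ)^(-(Ln:ℝ)) * M - T ≤ ((Nj n T Ln : ℤ) : ℝ) := Nj_ge_real n T Ln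
  have hNLpos : (0:ℝ) < ((Nj n T Ln : ℤ) : ℝ) := by linarith
  have hNle : ∀ j : ℕ, ((Nj n T j : ℤ) : ℝ) ≤ (2:ℝ)^(-(j:ℝ)) * M :=
    fun j => Nj_le_real n T j hT hM0
  -- denominator positive
  have hS0 : (0:ℝ) < ∑ j ∈ Finset.Icc Ln j₁, ((Nj n T j : ℤ) : ℝ) := by
    have hmem : Ln ∈ Finset.Icc Ln j₁ := by simp [hj₁L]
    have := Finset.single_le_sum (f := fun j => ((Nj n T j : ℤ) : ℝ))
      (fun j _ => Nj_nonneg_real n T j) hmem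
    linarith
  -- key inequality
  have hkey : ∑ j ∈ Finset.Icc Ln j₁, ((j:ℝ) - Ln - 1) * ((Nj n T j : ℤ) : ℝ) < 0 := by
    have hsplit : Finset.Icc Ln j₁ = insert Ln (Finset.Ioc Ln j₁) :=
      (Finset.Ioc_insert_left hj₁L).symm
    rw [hsplit, Finset.sum_insert Finset.left_notMem_Ioc]
    have hfst : ((Ln:ℝ) - Ln - 1) * ((Nj n T Ln : ℤ) : ℝ) = -((Nj n T Ln : ℤ) : ℝ) := by
      ring
    rw [hfst]
    have hmain : ∑ j ∈ Finset.Ioc Ln j₁, ((j:ℝ) - Ln - 1) * ((Nj n T j : ℤ) : ℝ)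
        < ((Nj n T Ln : ℤ) : ℝ) := by
      by_cases h0 : ∀ j ∈ Finset.Icc (Ln+2) j₁, Nj n T j = 0
      · have : ∑ j ∈ Finset.Ioc Ln j₁, ((j:ℝ) - Ln - 1) * ((Nj n T j : ℤ) : ℝ) = 0 := by
          apply Finset.sum_eq_zero
          intro j hj
          rw [Finset.mem_Ioc] at hj
          rcases eq_or_lt_of_le (Nat.succ_le_of_lt hj.1) with he | hlt
          · have : (j:ℝ) - Ln - 1 = 0 := by
              rw [← he]; push_cast; ring
            rw [this, zero_mul]
          · have : Nj n T j = 0 := h0 j (Finset.mem_Icc.mpr ⟨hlt, hj.2⟩)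
            rw [this]; simp
        rw [this]; exact hNLpos
      · push_neg at h0
        set S := (Finset.Icc (Ln+2) j₁).filter (fun j => Nj n T j ≠ 0) with hS
        have hne : S.Nonempty := by
          obtain ⟨j, hj1, hj2⟩ := h0
          exact ⟨j, Finset.mem_filter.mpr ⟨hj1, hj2⟩⟩
        set K := S.max' hne with hK
        have hKfl := Finset.mem_filter.mp (S.max'_mem hne)
        have hKIcc := Finset.mem_Icc.mp hKfl.1
        obtain ⟨hK2, hKj⟩ := hKIcc
        have hKne : Nj n T K ≠ 0 := hKfl.2
        have hxK : (T:ℝ) ≤ (2:ℝ)^(-(K:ℝ)) * M := Nj_ne_zero n T K hKne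
        have hmax : ∀ j ∈ S, j ≤ K := fun j hj => S.le_max' j hj
        -- restrict sum to Icc (Ln+2) K
        have hsub : Finset.Icc (Ln+2) K ⊆ Finset.Ioc Ln j₁ := by
          intro j hj
          rw [Finset.mem_Icc] at hj
          rw [Finset.mem_Ioc]
          exact ⟨by omega, le_trans hj.2 hKj⟩
        have hzero : ∀ j ∈ Finset.Ioc Ln j₁, j ∉ Finset.Icc (Ln+2) K →
            ((j:ℝ) - Ln - 1) * ((Nj n T j : ℤ) : ℝ) = 0 := by
          intro j hj hj'
          rw [Finset.mem_Ioc] at hj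
          rw [Finset.mem_Icc] at hj'
          push_neg at hj'
          by_cases hc : Ln + 2 ≤ j
          · have hjK : K < j := hj' hc
            have : Nj n T j = 0 := by
              by_contra hne'
              have : j ∈ S := by
                rw [hS, Finset.mem_filter, Finset.mem_Icc]
                exact ⟨⟨hc, hj.2⟩, hne'⟩
              exact absurd (hmax j this) (by omega)
            rw [this]; simp
          · have hj1 : j = Ln + 1 := by omega
            have : (j:ℝ) - Ln - 1 = 0 := by rw [hj1]; push_cast; ring
            rw [this, zero_mul]
        rw [← Finset.sum_subset hsub hzero]
        -- reindex
        set m := K - Ln with hm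
        have hKm : K = Ln + m := by omega
        have hm2 : 2 ≤ m := by omega
        have hre : ∑ j ∈ Finset.Icc (Ln+2) K, ((j:ℝ) - Ln - 1) * ((Nj n T j : ℤ) : ℝ)
            = ∑ k ∈ Finset.Icc 2 m, (((Ln+k : ℕ):ℝ) - Ln - 1) * ((Nj n T (Ln+k) : ℤ) : ℝ) := by
          rw [hKm, ← Finset.map_add_left_Icc, Finset.sum_map]
          rfl
        rw [hre]
        have hbound : ∑ k ∈ Finset.Icc 2 m, (((Ln+k : ℕ):ℝ) - Ln - 1) * ((Nj n T (Ln+k) : ℤ) : ℝ)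
            ≤ ∑ k ∈ Finset.Icc 2 m, ((k:ℝ)-1) * ((2:ℝ)^(-(k:ℝ)) * ((2:ℝ)^(-(Ln:ℝ)) * M)) := by
          apply Finset.sum_le_sum
          intro k hk
          rw [Finset.mem_Icc] at hk
          have hk1 : (1:ℝ) ≤ (k:ℝ) - 1 := by
            have : (2:ℝ) ≤ (k:ℝ) := by exact_mod_cast hk.1
            linarith
          have hcast : (((Ln+k : ℕ):ℝ) - Ln - 1) = (k:ℝ) - 1 := by push_cast; ring
          rw [hcast]
          have hpw : (2:ℝ)^(-((Ln+k:ℕ):ℝ)) = (2:ℝ)^(-(k:ℝ)) * (2:ℝ)^(-(Ln:ℝ)) := by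
            rw [← Real.rpow_add (by norm_num : (0:ℝ) < 2)]
            push_cast
            ring_nf
          have := hNle (Ln+k)
          rw [hpw] at this
          calc ((k:ℝ)-1) * ((Nj n T (Ln+k) : ℤ) : ℝ)
              ≤ ((k:ℝ)-1) * ((2:ℝ)^(-(k:ℝ)) * (2:ℝ)^(-(Ln:ℝ)) * M) := by
                apply mul_le_mul_of_nonneg_left _ (by linarith)
                linarith [this]
            _ = ((k:ℝ)-1) * ((2:ℝ)^(-(k:ℝ)) * ((2:ℝ)^(-(Ln:ℝ)) * M)) := by ring
        have hgeo : ∑ k ∈ Finset.Icc 2 m, ((k:ℝ)-1) * ((2:ℝ)^(-(k:ℝ)) * ((2:ℝ)^(-(Ln:ℝ)) * M))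
            = (1 - ((m:ℝ)+1) * (2:ℝ)^(-(m:ℝ))) * ((2:ℝ)^(-(Ln:ℝ)) * M) := by
          calc ∑ k ∈ Finset.Icc 2 m, ((k:ℝ)-1) * ((2:ℝ)^(-(k:ℝ)) * ((2:ℝ)^(-(Ln:ℝ)) * M))
              = ∑ k ∈ Finset.Icc 2 m, (((k:ℝ)-1) * (2:ℝ)^(-(k:ℝ))) * ((2:ℝ)^(-(Ln:ℝ)) * M) := by
                apply Finset.sum_congr rfl; intro k _; ring
            _ = (∑ k ∈ Finset.Icc 2 m, ((k:ℝ)-1) * (2:ℝ)^(-(k:ℝ))) * ((2:ℝ)^(-(Ln:ℝ)) * M) := by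
                rw [← Finset.sum_mul]
            _ = (1 - ((m:ℝ)+1) * (2:ℝ)^(-(m:ℝ))) * ((2:ℝ)^(-(Ln:ℝ)) * M) := by
                rw [geom_aux]
        have hm3 : (3:ℝ) ≤ (m:ℝ) + 1 := by
          have : (2:ℝ) ≤ (m:ℝ) := by exact_mod_cast hm2
          linarith
        have h3T : 3 * (T:ℝ) ≤ ((m:ℝ)+1) * ((2:ℝ)^(-(K:ℝ)) * M) :=
          mul_le_mul hm3 hxK (by linarith) (by linarith)
        have hfin : (1 - ((m:ℝ)+1) * (2:ℝ)^(-(m:ℝ))) * ((2:ℝ)^(-(Ln:ℝ)) * M)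
            < ((Nj n T Ln : ℤ) : ℝ) := by
          have hEq : (1 - ((m:ℝ)+1) * (2:ℝ)^(-(m:ℝ))) * ((2:ℝ)^(-(Ln:ℝ)) * M)
              = (2:ℝ)^(-(Ln:ℝ)) * M - ((m:ℝ)+1) * ((2:ℝ)^(-(m:ℝ)) * (2:ℝ)^(-(Ln:ℝ)) * M) := by
            ring
          have hpK : (2:ℝ)^(-(m:ℝ)) * (2:ℝ)^(-(Ln:ℝ)) * M = (2:ℝ)^(-(K:ℝ)) * M := by
            rw [← Real.rpow_add (by norm_num : (0:ℝ) < 2)]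
            congr 2
            rw [hKm]; push_cast; ring
          rw [hEq, hpK]
          nlinarith [h3T, hNL, hT1]
        linarith
    linarith
  constructor
  · rw [le_div_iff₀ hS0, Finset.mul_sum]
    apply Finset.sum_le_sum
    intro j hj
    rw [Finset.mem_Icc] at hj
    have : (Ln:ℝ) ≤ (j:ℝ) := by exact_mod_cast hj.1
    exact mul_le_mul_of_nonneg_right this (Nj_nonneg_real n T j)
  · rw [div_lt_iff₀ hS0]
    have he : ∑ j ∈ Finset.Icc Ln j₁, (j:ℝ) * ((Nj n T j : ℤ) : ℝ)
        = (∑ j ∈ Finset.Icc Ln j₁, ((j:ℝ) - Ln - 1) * ((Nj n T j : ℤ) : ℝ))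
          + ((Ln:ℝ)+1) * ∑ j ∈ Finset.Icc Ln j₁, ((Nj n T j : ℤ) : ℝ) := by
      rw [Finset.mul_sum, ← Finset.sum_add_distrib]
      apply Finset.sum_congr rfl
      intro j _
      ring
    rw [he]
    linarith
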